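/- arXiv:math/0603569 — 2 statements merged into one kernel-verified Lean document; each statement's English description precedes it below -/
import Mathlib

section
/- Let $Q(\mathbf{x}) = A_1 x_1^2 + A_2 x_2^2 + A_3 x_3^2 + A_4 x_4^2$ with nonzero integers $A_i$, and for $q \in \mathbb{N}$, $\mathbf{c} \in \mathbb{Z}^4$ define $S_q(\mathbf{c}) = \sum_{a=1, \gcd(a,q)=1}^{q} \sum_{\mathbf{b} \bmod q} e^{2\pi i (a Q(\mathbf{b}) + \mathbf{b}\cdot\mathbf{c})/q}$. Then there is an absolute constant $C$ such that $|S_q(\mathbf{c})| \le C\, q^3 \prod_{i=1}^{4} \gcd(q, A_i)^{1/2}$. -/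
open Finset

noncomputable def Sq (n : ℕ) (A : Fin n → ℤ) (q : ℕ) (c : Fin n → ℤ) : ℂ :=
  ∑ a ∈ (Finset.Icc 1 q).filter (fun a => Nat.gcd a q = 1),
    ∑ b ∈ Fintype.piFinset (fun _ : Fin n => Finset.range q),
      Complex.exp (2 * Real.pi * Complex.I *
        ((a : ℂ) * (∑ i, (A i : ℂ) * (b i : ℂ) ^ 2) + ∑ i, (b i : ℂ) * (c i : ℂ)) / q)

open Finset Complex


noncomputable def eZ (q : ℕ) (m : ℤ) : ℂ := Complex.exp (2 * Real.pi * Complex.I * m / q)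

lemma eZ_norm (q : ℕ) (m : ℤ) : ‖eZ q m‖ = 1 := by
  have : eZ q m = Complex.exp (((2 * Real.pi * m / q : ℝ) : ℂ) * Complex.I) := by
    unfold eZ; congr 1; push_cast; ring
  rw [this]
  exact Complex.norm_exp_ofReal_mul_I _

lemma eZ_add (q : ℕ) (m n : ℤ) : eZ q (m + n) = eZ q m * eZ q n := by
  unfold eZ; rw [← Complex.exp_add]; congr 1; push_cast; ring

lemma eZ_zero (q : ℕ) : eZ q 0 = 1 := by
  unfold eZ; simp

lemma eZ_dvd (q : ℕ) (m : ℤ) (h : (q : ℤ) ∣ m) : eZ q m = 1 := by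
  rcases eq_or_ne q 0 with rfl | hq
  · unfold eZ; simp
  obtain ⟨k, rfl⟩ := h
  unfold eZ
  have hq' : (q : ℂ) ≠ 0 := by exact_mod_cast hq
  have : 2 * (Real.pi : ℂ) * Complex.I * ((q : ℤ) * k : ℤ) / q = k * (2 * Real.pi * Complex.I) := by
    push_cast; field_simp
  rw [this]
  exact Complex.exp_int_mul_two_pi_mul_I k

lemma eZ_eq_one_iff (q : ℕ) (hq : 0 < q) (m : ℤ) : eZ q m = 1 ↔ (q : ℤ) ∣ m := by
  constructor
  · intro h
    unfold eZ at h
    rw [Complex.exp_eq_one_iff] at h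
    obtain ⟨n, hn⟩ := h
    have hq' : (q : ℂ) ≠ 0 := Nat.cast_ne_zero.mpr hq.ne'
    have hpi : (Real.pi : ℂ) ≠ 0 := by exact_mod_cast Real.pi_ne_zero
    have : (m : ℂ) = (n : ℂ) * q := by
      field_simp at hn
      have := Complex.I_ne_zero
      -- hn : 2 * π * I * m = n * (2 * π * I) * q
      have h2 : (m : ℂ) * (2 * Real.pi * Complex.I) = (n : ℂ) * q * (2 * Real.pi * Complex.I) := by
        ring_nf at hn ⊢; linear_combination (2 * (Real.pi : ℂ) * Complex.I) * hn
      exact mul_right_cancel₀ (by simp [hpi, Complex.I_ne_zero]) h2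
    have : m = n * q := by exact_mod_cast this
    exact ⟨n, by linarith⟩
  · exact eZ_dvd q m

lemma eZ_pow (q : ℕ) (m : ℤ) (n : ℕ) : eZ q m ^ n = eZ q (m * n) := by
  induction n with
  | zero => simp [eZ_zero]
  | succ k ih => rw [pow_succ, ih, ← eZ_add]; congr 1; push_cast; ring

lemma eZ_sum_orth (q : ℕ) (hq : 0 < q) (m : ℤ) :
    ∑ b ∈ range q, eZ q (m * b) = if (q : ℤ) ∣ m then (q : ℂ) else 0 := by
  have key : ∀ b : ℕ, eZ q (m * b) = eZ q m ^ b := fun b => (eZ_pow q m b).symm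
  simp_rw [key]
  split_ifs with h
  · rw [eZ_dvd q m h]; simp
  · have hne : eZ q m ≠ 1 := fun hc => h ((eZ_eq_one_iff q hq m).mp hc)
    rw [geom_sum_eq hne q]
    rw [eZ_pow, eZ_dvd q (m * q) ⟨m, mul_comm m q⟩]
    simp


lemma count_mult (q d : ℕ) (hq : 0 < q) (hd : d ∣ q) (hd0 : 0 < d) :
    ((range q).filter (fun h => d ∣ h)).card = q / d := by
  have : (range q).filter (fun h => d ∣ h) = (range (q / d)).image (fun j => d * j) := by
    ext h
    simp only [mem_filter, mem_range, mem_image]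
    constructor
    · rintro ⟨hlt, k, rfl⟩
      exact ⟨k, by rw [Nat.lt_div_iff_mul_lt' hd]; omega, rfl⟩
    · rintro ⟨j, hj, rfl⟩
      rw [Nat.lt_div_iff_mul_lt' hd] at hj
      exact ⟨hj, ⟨j, rfl⟩⟩
  rw [this, Finset.card_image_of_injective _ (fun a b hab => by
    exact Nat.eq_of_mul_eq_mul_left hd0 hab), card_range]

lemma count_dvd (q : ℕ) (hq : 0 < q) (m : ℤ) :
    ((range q).filter (fun (h : ℕ) => (q : ℤ) ∣ m * (h : ℤ))).card = Nat.gcd q m.natAbs := by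
  set M := m.natAbs with hM
  have hiff : ∀ h : ℕ, ((q : ℤ) ∣ m * (h : ℤ)) ↔ q ∣ M * h := by
    intro h
    rw [Int.natCast_dvd]
    rw [Int.natAbs_mul, Int.natAbs_natCast]
  set d := Nat.gcd q M with hd
  have hd0 : 0 < d := Nat.gcd_pos_of_pos_left M hq
  have hdq : d ∣ q := Nat.gcd_dvd_left q M
  have hdM : d ∣ M := Nat.gcd_dvd_right q M
  set q' := q / d with hq'
  have hqq : q = d * q' := by rw [hq', Nat.mul_div_cancel' hdq]
  have hcop : Nat.Coprime q' (M / d) := by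
    have := Nat.coprime_div_gcd_div_gcd (m := q) (n := M) hd0
    exact this
  have hiff2 : ∀ h : ℕ, (q ∣ M * h) ↔ q' ∣ h := by
    intro h
    constructor
    · intro hh
      have h1 : d * q' ∣ d * (M / d * h) := by
        rw [← hqq, ← mul_assoc, Nat.mul_div_cancel' hdM]; exact hh
      have h2 : q' ∣ M / d * h := (mul_dvd_mul_iff_left hd0.ne').mp h1
      exact hcop.dvd_of_dvd_mul_left h2
    · rintro ⟨k, rfl⟩
      have : M * (q' * k) = q * (M / d * k) := by
        rw [hqq]
        conv_lhs => rw [← Nat.div_mul_cancel hdM]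
        ring
      exact ⟨M / d * k, this⟩
  have : (range q).filter (fun (h : ℕ) => (q : ℤ) ∣ m * (h : ℤ)) = (range q).filter (fun h => q' ∣ h) := by
    apply filter_congr; intro h _; rw [hiff, hiff2]
  have hq'q : q' ∣ q := ⟨d, by rw [hqq]; ring⟩
  have hq'0 : 0 < q' := Nat.div_pos (Nat.le_of_dvd hq hdq) hd0
  rw [this, count_mult q q' hq hq'q hq'0]
  rw [hqq, Nat.mul_div_cancel d hq'0]

lemma eZ_congr (q : ℕ) (m n : ℤ) (h : (q : ℤ) ∣ (m - n)) : eZ q m = eZ q n := by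
  have : m = n + (m - n) := by ring
  rw [this, eZ_add, eZ_dvd q _ h, mul_one]

lemma eZ_conj (q : ℕ) (m : ℤ) : (starRingEnd ℂ) (eZ q m) = eZ q (-m) := by
  unfold eZ
  have h1 : (2 * (Real.pi : ℂ) * I * m / q) = ((2 * Real.pi * (m : ℝ) / q : ℝ) : ℂ) * I := by
    push_cast; ring
  have h2 : (2 * (Real.pi : ℂ) * I * (-m : ℤ) / q) = -(((2 * Real.pi * (m : ℝ) / q : ℝ) : ℂ)) * I := by
    push_cast; ring
  rw [h1, h2, ← Complex.exp_conj]
  congr 1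
  rw [map_mul, Complex.conj_ofReal, Complex.conj_I]
  ring

lemma sum_zmod_range {M : Type*} [AddCommMonoid M] (q : ℕ) [NeZero q] (F : ℕ → M) :
    ∑ b ∈ range q, F b = ∑ x : ZMod q, F x.val := by
  apply Finset.sum_nbij' (i := fun (b : ℕ) => (b : ZMod q)) (j := fun (x : ZMod q) => x.val)
  · intros; exact mem_univ _
  · intro x _; exact mem_range.mpr (ZMod.val_lt x)
  · intro b hb; exact ZMod.val_cast_of_lt (mem_range.mp hb)
  · intro x _; exact ZMod.natCast_rightInverse x
  · intro b hb; rw [ZMod.val_cast_of_lt (mem_range.mp hb)]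

lemma quad_congr (α β u w : ℤ) (q : ℕ) (h : (q : ℤ) ∣ (u - w)) :
    (q : ℤ) ∣ (α * u ^ 2 + β * u) - (α * w ^ 2 + β * w) := by
  have : (α * u ^ 2 + β * u) - (α * w ^ 2 + β * w) = (u - w) * (α * (u + w) + β) := by ring
  rw [this]
  exact h.mul_right _

lemma gauss_bound (q : ℕ) (hq : 0 < q) (α β : ℤ) :
    ‖∑ b ∈ range q, eZ q (α * (b : ℤ) ^ 2 + β * (b : ℤ))‖ ^ 2
      ≤ (q : ℝ) * Nat.gcd q (2 * α).natAbs := by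
  haveI : NeZero q := ⟨hq.ne'⟩
  set g : ℤ → ℤ := fun u => α * u ^ 2 + β * u with hg
  set S := ∑ b ∈ range q, eZ q (g b) with hS
  -- transfer to ZMod q
  have hSz : S = ∑ x : ZMod q, eZ q (g x.val) := sum_zmod_range q _
  -- key congruence for shifted argument
  have hshift : ∀ x h : ZMod q,
      eZ q (g x.val - g ((x + h).val))
        = eZ q (-(α * (h.val : ℤ) ^ 2 + β * (h.val : ℤ))) * eZ q ((-(2 * α) * (h.val : ℤ)) * (x.val : ℤ)) := by
    intro x h
    rw [← eZ_add]
    apply eZ_congr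
    have hval : (q : ℤ) ∣ ((x.val : ℤ) + (h.val : ℤ) - ((x + h).val : ℤ)) := by
      have h1 : (x + h).val = (x.val + h.val) % q := ZMod.val_add x h
      have h2 := Nat.mod_add_div (x.val + h.val) q
      refine ⟨((x.val + h.val) / q : ℕ), ?_⟩
      rw [h1]; push_cast; push_cast at h2; linarith
    have hq2 := quad_congr α β ((x.val : ℤ) + (h.val : ℤ)) (((x + h).val : ℤ)) q hval
    -- g x.val - g ((x+h).val) - target = (g (x.val + h.val) - g ((x+h).val))
    have hring : g (x.val : ℤ) - g (((x + h).val : ℤ))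
        - ((-(α * (h.val : ℤ) ^ 2 + β * (h.val : ℤ))) + ((-(2 * α) * (h.val : ℤ)) * (x.val : ℤ)))
        = (α * ((x.val : ℤ) + (h.val : ℤ)) ^ 2 + β * ((x.val : ℤ) + (h.val : ℤ)))
          - (α * (((x + h).val : ℤ)) ^ 2 + β * (((x + h).val : ℤ))) := by
      simp only [hg]; ring
    rw [hring]
    exact hq2
  -- compute S * conj S
  have hT : S * (starRingEnd ℂ) S
      = ∑ h : ZMod q, eZ q (-(α * (h.val : ℤ) ^ 2 + β * (h.val : ℤ)))
          * (if (q : ℤ) ∣ (-(2 * α) * (h.val : ℤ)) then (q : ℂ) else 0) := by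
    rw [hSz, map_sum]
    simp_rw [eZ_conj]
    rw [Finset.sum_mul_sum]
    -- now ∑ x ∑ y, eZ (g x.val) * eZ (-(g y.val))... check orientation
    have step1 : ∀ x : ZMod q, ∑ y : ZMod q, eZ q (g (x.val : ℤ)) * eZ q (-(g (y.val : ℤ)))
        = ∑ h : ZMod q, eZ q (-(α * (h.val : ℤ) ^ 2 + β * (h.val : ℤ)))
            * eZ q ((-(2 * α) * (h.val : ℤ)) * (x.val : ℤ)) := by
      intro x
      rw [← Equiv.sum_comp (Equiv.addLeft x) (fun y => eZ q (g (x.val : ℤ)) * eZ q (-(g (y.val : ℤ))))]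
      apply Finset.sum_congr rfl
      intro h _
      simp only [Equiv.coe_addLeft]
      rw [← eZ_add]
      rw [show g (x.val : ℤ) + -g (((x + h).val : ℤ)) = g (x.val : ℤ) - g (((x + h).val : ℤ)) from by ring, hshift x h]
    rw [Finset.sum_congr rfl (fun x _ => step1 x), Finset.sum_comm]
    apply Finset.sum_congr rfl
    intro h _
    rw [← Finset.mul_sum]
    congr 1
    rw [← sum_zmod_range q (fun b => eZ q ((-(2 * α) * (h.val : ℤ)) * (b : ℤ)))]
    exact eZ_sum_orth q hq _
  -- now bound norms
  have hnormT : ‖S‖ ^ 2 = ‖S * (starRingEnd ℂ) S‖ := by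
    rw [norm_mul, RCLike.norm_conj, sq]
  rw [hnormT, hT]
  calc ‖∑ h : ZMod q, eZ q (-(α * (h.val : ℤ) ^ 2 + β * (h.val : ℤ)))
          * (if (q : ℤ) ∣ (-(2 * α) * (h.val : ℤ)) then (q : ℂ) else 0)‖
      ≤ ∑ h : ZMod q, ‖eZ q (-(α * (h.val : ℤ) ^ 2 + β * (h.val : ℤ)))
          * (if (q : ℤ) ∣ (-(2 * α) * (h.val : ℤ)) then (q : ℂ) else 0)‖ := norm_sum_le _ _
    _ = ∑ h : ZMod q, (if (q : ℤ) ∣ (-(2 * α) * (h.val : ℤ)) then (q : ℝ) else 0) := by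
        apply Finset.sum_congr rfl
        intro h _
        rw [norm_mul, eZ_norm, one_mul]
        split_ifs <;> simp
    _ = ∑ b ∈ range q, (if (q : ℤ) ∣ (-(2 * α) * (b : ℤ)) then (q : ℝ) else 0) := by
        rw [sum_zmod_range q (fun b => if (q : ℤ) ∣ (-(2 * α) * (b : ℤ)) then (q : ℝ) else 0)]
    _ = ((range q).filter (fun (b : ℕ) => (q : ℤ) ∣ (-(2 * α)) * (b : ℤ))).card * (q : ℝ) := by
        rw [Finset.sum_ite, Finset.sum_const_zero, add_zero, Finset.sum_const, nsmul_eq_mul]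
    _ ≤ (q : ℝ) * Nat.gcd q (2 * α).natAbs := by
        rw [count_dvd q hq (-(2 * α))]
        have : (-(2 * α)).natAbs = (2 * α).natAbs := Int.natAbs_neg _
        rw [this, mul_comm]

lemma eZ_sum (q : ℕ) {ι : Type*} (s : Finset ι) (f : ι → ℤ) :
    eZ q (∑ i ∈ s, f i) = ∏ i ∈ s, eZ q (f i) := by
  induction s using Finset.cons_induction with
  | empty => simp [eZ_zero]
  | cons i s hi ih => rw [Finset.sum_cons, Finset.prod_cons, eZ_add, ih]

lemma inner_factor (n : ℕ) (A : Fin n → ℤ) (q : ℕ) (c : Fin n → ℤ) (a : ℕ) :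
    ∑ b ∈ Fintype.piFinset (fun _ : Fin n => Finset.range q),
      Complex.exp (2 * Real.pi * Complex.I *
        ((a : ℂ) * (∑ i, (A i : ℂ) * (b i : ℂ) ^ 2) + ∑ i, (b i : ℂ) * (c i : ℂ)) / q)
    = ∏ i, ∑ x ∈ range q, eZ q ((a : ℤ) * A i * (x : ℤ) ^ 2 + c i * (x : ℤ)) := by
  rw [Finset.prod_univ_sum]
  apply Finset.sum_congr rfl
  intro b _
  rw [← eZ_sum]
  unfold eZ
  congr 2
  push_cast
  rw [Finset.mul_sum, ← Finset.sum_add_distrib]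
  congr 1
  apply Finset.sum_congr rfl
  intro i _
  ring

lemma gcd_step (q a : ℕ) (hq : 0 < q) (hcop : Nat.gcd a q = 1) (A : ℤ) :
    Nat.gcd q (2 * ((a : ℤ) * A)).natAbs ≤ 2 * Nat.gcd q A.natAbs := by
  have h1 : (2 * ((a : ℤ) * A)).natAbs = 2 * A.natAbs * a := by
    rw [Int.natAbs_mul, Int.natAbs_mul]
    simp [Int.natAbs_natCast]
    ring
  rw [h1, Nat.Coprime.gcd_mul_right_cancel_right _ hcop]
  have hdvd : Nat.gcd q (2 * A.natAbs) ∣ 2 * Nat.gcd q A.natAbs := by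
    have h2 := Nat.gcd_dvd_gcd_mul_left_left q (2 * A.natAbs) 2
    rwa [Nat.gcd_mul_left] at h2
  exact Nat.le_of_dvd (by have := Nat.gcd_pos_of_pos_left A.natAbs hq; omega) hdvd

lemma factor_bound (q a : ℕ) (hq : 0 < q) (hcop : Nat.gcd a q = 1) (A β : ℤ) :
    ‖∑ x ∈ range q, eZ q ((a : ℤ) * A * (x : ℤ) ^ 2 + β * (x : ℤ))‖
      ≤ Real.sqrt (2 * q * Nat.gcd q A.natAbs) := by
  have h1 := gauss_bound q hq ((a : ℤ) * A) β
  have h2 := gcd_step q a hq hcop A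
  have h3 : ‖∑ x ∈ range q, eZ q ((a : ℤ) * A * (x : ℤ) ^ 2 + β * (x : ℤ))‖ ^ 2
      ≤ 2 * q * Nat.gcd q A.natAbs := by
    calc _ ≤ (q : ℝ) * Nat.gcd q (2 * ((a : ℤ) * A)).natAbs := h1
      _ ≤ (q : ℝ) * (2 * Nat.gcd q A.natAbs) := by
          apply mul_le_mul_of_nonneg_left _ (by positivity)
          exact_mod_cast h2
      _ = 2 * q * Nat.gcd q A.natAbs := by ring
  calc ‖∑ x ∈ range q, eZ q ((a : ℤ) * A * (x : ℤ) ^ 2 + β * (x : ℤ))‖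
      = Real.sqrt (‖∑ x ∈ range q, eZ q ((a : ℤ) * A * (x : ℤ) ^ 2 + β * (x : ℤ))‖ ^ 2) :=
        (Real.sqrt_sq (norm_nonneg _)).symm
    _ ≤ Real.sqrt (2 * q * Nat.gcd q A.natAbs) := Real.sqrt_le_sqrt h3

theorem Sq_le_of_dim_four :
    ∃ C : ℝ, 0 < C ∧ ∀ (A : Fin 4 → ℤ), (∀ i, A i ≠ 0) → ∀ (q : ℕ), 0 < q →
      ∀ (c : Fin 4 → ℤ),
      ‖Sq 4 A q c‖ ≤ C * (q : ℝ) ^ 3 *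
        ∏ i, Real.sqrt (Nat.gcd q (A i).natAbs) := by
  refine ⟨4, by norm_num, ?_⟩
  intro A _ q hq c
  unfold Sq
  have step1 : ‖∑ a ∈ (Finset.Icc 1 q).filter (fun a => Nat.gcd a q = 1),
      ∑ b ∈ Fintype.piFinset (fun _ : Fin 4 => Finset.range q),
        Complex.exp (2 * Real.pi * Complex.I *
          ((a : ℂ) * (∑ i, (A i : ℂ) * (b i : ℂ) ^ 2) + ∑ i, (b i : ℂ) * (c i : ℂ)) / q)‖
      ≤ ∑ a ∈ (Finset.Icc 1 q).filter (fun a => Nat.gcd a q = 1),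
          ∏ i, Real.sqrt (2 * q * Nat.gcd q (A i).natAbs) := by
    refine (norm_sum_le _ _).trans ?_
    apply Finset.sum_le_sum
    intro a ha
    rw [inner_factor]
    refine (Finset.norm_prod_le _ _).trans ?_
    apply Finset.prod_le_prod (fun i _ => norm_nonneg _)
    intro i _
    exact factor_bound q a hq (Finset.mem_filter.mp ha).2 (A i) (c i)
  refine step1.trans ?_
  rw [Finset.sum_const, nsmul_eq_mul]
  have hcard : (((Finset.Icc 1 q).filter (fun a => Nat.gcd a q = 1)).card : ℝ) ≤ q := by
    have := Finset.card_filter_le (Finset.Icc 1 q) (fun a => Nat.gcd a q = 1)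
    have h2 : (Finset.Icc 1 q).card = q := by rw [Nat.card_Icc]; omega
    exact_mod_cast le_trans this (le_of_eq h2)
  have hprod : ∏ i : Fin 4, Real.sqrt (2 * q * Nat.gcd q (A i).natAbs)
      = 4 * (q : ℝ) ^ 2 * ∏ i, Real.sqrt (Nat.gcd q (A i).natAbs) := by
    have h1 : ∀ i : Fin 4, Real.sqrt (2 * q * Nat.gcd q (A i).natAbs)
        = Real.sqrt (2 * q) * Real.sqrt (Nat.gcd q (A i).natAbs) :=
      fun i => Real.sqrt_mul (by positivity) _
    simp_rw [h1]
    rw [Finset.prod_mul_distrib, Finset.prod_const]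
    congr 1
    have : Real.sqrt (2 * q) ^ (Finset.univ : Finset (Fin 4)).card = Real.sqrt (2 * q) ^ 4 := by
      norm_num
    rw [this]
    have h2 : Real.sqrt (2 * q) ^ 4 = (Real.sqrt (2 * q) ^ 2) ^ 2 := by ring
    rw [h2, Real.sq_sqrt (by positivity)]
    ring
  rw [hprod]
  have hgcd_nonneg : (0 : ℝ) ≤ ∏ i, Real.sqrt (Nat.gcd q (A i).natAbs) :=
    Finset.prod_nonneg (fun i _ => Real.sqrt_nonneg _)
  calc (((Finset.Icc 1 q).filter (fun a => Nat.gcd a q = 1)).card : ℝ)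
        * (4 * (q : ℝ) ^ 2 * ∏ i, Real.sqrt (Nat.gcd q (A i).natAbs))
      ≤ (q : ℝ) * (4 * (q : ℝ) ^ 2 * ∏ i, Real.sqrt (Nat.gcd q (A i).natAbs)) := by
        apply mul_le_mul_of_nonneg_right hcard (by positivity)
    _ = 4 * (q : ℝ) ^ 3 * ∏ i, Real.sqrt (Nat.gcd q (A i).natAbs) := by ring
end

section
/- Let $n \ge 2$, let $A_1, \ldots, A_n$ be positive reals with $A_n = \max_i A_i$, let $c > 0$, and let $\mathcal{V}$ be the set of $(x_2, \ldots, x_n) \in \mathbb{R}^{n-1}$ such that $|x_i| \le c\, A_i^{1/2}$ for $2 \le i \le n$ and $|\sigma_2 x_2^2 + \cdots + \sigma_n x_n^2| \le c\, A_1$, where each $\sigma_i \in \{-1, +1\}$. Then the Lebesgue measure of $\mathcal{V}$ is $\ll_{n,c} (A_1 \cdots A_n)^{1/2} / \max_i A_i^{1/2}$. -/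
open Finset MeasureTheory

lemma sq_window_bound (b δ : ℝ) (hδ : 0 < δ) :
    volume {t : ℝ | |t ^ 2 - b| ≤ δ} ≤ ENNReal.ofReal (2 * Real.sqrt (2 * δ)) := by
  set a := max (b - δ) 0 with ha
  set B := b + δ with hB
  by_cases hBneg : B < 0
  · have he : {t : ℝ | |t ^ 2 - b| ≤ δ} = ∅ := by
      ext t; simp only [Set.mem_setOf_eq, Set.mem_empty_iff_false, iff_false]
      intro h
      have := abs_le.1 h
      nlinarith [sq_nonneg t]
    simp [he, Real.sqrt_nonneg]
  push_neg at hBneg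
  have haB : a ≤ B := by
    rcases max_cases (b - δ) 0 with ⟨h1, _⟩ | ⟨h1, _⟩ <;> rw [ha, h1] <;> linarith
  have ha0 : 0 ≤ a := le_max_right _ _
  have hsa : Real.sqrt a ≤ Real.sqrt B := Real.sqrt_le_sqrt haB
  have hsub : {t : ℝ | |t ^ 2 - b| ≤ δ} ⊆
      Set.Icc (-Real.sqrt B) (Real.sqrt B) \ Set.Ioo (-Real.sqrt a) (Real.sqrt a) := by
    intro t ht
    simp only [Set.mem_setOf_eq] at ht
    have h := abs_le.1 ht
    have ht2 : t ^ 2 ≤ B := by linarith [h.2]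
    have ht1 : a ≤ t ^ 2 := by
      rcases max_cases (b - δ) 0 with ⟨h1, _⟩ | ⟨h1, _⟩ <;> rw [ha, h1] <;>
        nlinarith [sq_nonneg t]
    constructor
    · have habs : |t| ≤ Real.sqrt B := by
        rw [← Real.sqrt_sq_eq_abs]; exact Real.sqrt_le_sqrt ht2
      exact abs_le.1 habs
    · intro hmem
      have : |t| < Real.sqrt a := abs_lt.2 ⟨hmem.1, hmem.2⟩
      have h2 : t ^ 2 < a := by
        have := sq_lt_sq' hmem.1 hmem.2
        rwa [Real.sq_sqrt ha0] at this
      linarith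
  calc volume {t : ℝ | |t ^ 2 - b| ≤ δ}
      ≤ volume (Set.Icc (-Real.sqrt B) (Real.sqrt B) \ Set.Ioo (-Real.sqrt a) (Real.sqrt a)) :=
        measure_mono hsub
    _ = volume (Set.Icc (-Real.sqrt B) (Real.sqrt B)) -
        volume (Set.Ioo (-Real.sqrt a) (Real.sqrt a)) := by
        apply measure_diff
        · exact Set.Ioo_subset_Icc_self.trans (Set.Icc_subset_Icc (neg_le_neg hsa) hsa)
        · exact measurableSet_Ioo.nullMeasurableSet
        · exact (measure_Ioo_lt_top).ne
    _ = ENNReal.ofReal (Real.sqrt B - -Real.sqrt B) -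
        ENNReal.ofReal (Real.sqrt a - -Real.sqrt a) := by
        rw [Real.volume_Icc, Real.volume_Ioo]
    _ ≤ ENNReal.ofReal (2 * Real.sqrt (2 * δ)) := by
        rw [show Real.sqrt B - -Real.sqrt B = 2 * Real.sqrt B by ring,
          show Real.sqrt a - -Real.sqrt a = 2 * Real.sqrt a by ring,
          ← ENNReal.ofReal_sub _ (by positivity)]
        apply ENNReal.ofReal_le_ofReal
        have key : Real.sqrt B ≤ Real.sqrt a + Real.sqrt (2 * δ) := by
          nlinarith [Real.sq_sqrt (le_trans ha0 haB), Real.sq_sqrt ha0,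
            Real.sq_sqrt (by linarith : (0:ℝ) ≤ 2 * δ), Real.sqrt_nonneg a,
            Real.sqrt_nonneg (2 * δ), Real.sqrt_nonneg B,
            mul_nonneg (Real.sqrt_nonneg a) (Real.sqrt_nonneg (2 * δ)),
            haB, (by rcases max_cases (b - δ) 0 with ⟨h1,_⟩|⟨h1,h2⟩ <;>
              rw [ha, h1] <;> linarith : B - a ≤ 2 * δ)]
        linarith

lemma sqrt_prod' {ι : Type*} (s : Finset ι) (f : ι → ℝ) (hf : ∀ i ∈ s, 0 ≤ f i) :
    ∏ i ∈ s, Real.sqrt (f i) = Real.sqrt (∏ i ∈ s, f i) := by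
  induction s using Finset.cons_induction with
  | empty => simp
  | cons i s hi ih =>
    rw [Finset.prod_cons, Finset.prod_cons, ih (fun j hj => hf j (Finset.mem_cons_of_mem hj)),
      ← Real.sqrt_mul (hf i (Finset.mem_cons_self _ _))]

lemma volume_region_bound_aux (k : ℕ) (c : ℝ) (hc : 0 < c) (A1 : ℝ) (A : Fin (k+1) → ℝ) (σ : Fin (k+1) → ℝ)
    (hA1 : 0 < A1) (hA : ∀ i, 0 < A i) (hσ : ∀ i, σ i = 1 ∨ σ i = -1) :
    volume {x : Fin (k+1) → ℝ |
        (∀ i, |x i| ≤ c * Real.sqrt (A i)) ∧ |∑ i, σ i * x i ^ 2| ≤ c * A1} ≤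
      ENNReal.ofReal (((2*c)^k * (2 * Real.sqrt (2*c))) *
        Real.sqrt (A1 * ∏ i, A i) / Real.sqrt (A (Fin.last k))) := by
  set i0 : Fin (k+1) := Fin.last k with hi0
  set S := {x : Fin (k+1) → ℝ |
      (∀ i, |x i| ≤ c * Real.sqrt (A i)) ∧ |∑ i, σ i * x i ^ 2| ≤ c * A1} with hS
  have hSmeas : MeasurableSet S := by
    have h1 : MeasurableSet {x : Fin (k+1) → ℝ | ∀ i, |x i| ≤ c * Real.sqrt (A i)} := by
      rw [Set.setOf_forall]
      exact MeasurableSet.iInter fun i =>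
        measurableSet_le (measurable_pi_apply i).abs measurable_const
    have h2 : MeasurableSet {x : Fin (k+1) → ℝ | |∑ i, σ i * x i ^ 2| ≤ c * A1} :=
      measurableSet_le (Measurable.abs (Finset.measurable_sum _ fun i _ =>
        (measurable_const (a := σ i)).mul ((measurable_pi_apply i).pow_const 2))) measurable_const
    exact h1.inter h2
  set e := MeasurableEquiv.piFinSuccAbove (fun _ : Fin (k+1) => ℝ) i0 with he
  have hmp := volume_preserving_piFinSuccAbove (fun _ : Fin (k+1) => ℝ) i0
  have happ : ∀ (t : ℝ) (y : Fin k → ℝ),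
      e.symm (t, y) i0 = t ∧ ∀ j, e.symm (t, y) (i0.succAbove j) = y j := by
    intro t y
    constructor
    · show Fin.insertNth (α := fun _ => ℝ) i0 t y i0 = t; simp
    · intro j; show Fin.insertNth (α := fun _ => ℝ) i0 t y (i0.succAbove j) = y j; simp
  set Box : Set (Fin k → ℝ) := Set.pi Set.univ fun j =>
    Set.Icc (-(c * Real.sqrt (A (i0.succAbove j)))) (c * Real.sqrt (A (i0.succAbove j))) with hBox
  have hBoxmeas : MeasurableSet Box := MeasurableSet.univ_pi fun j => measurableSet_Icc
  have hvol : volume S = ∫⁻ y, volume ((fun t => (t, y)) ⁻¹' (e.symm ⁻¹' S)) := by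
    rw [← (hmp.symm e).measure_preimage hSmeas.nullMeasurableSet, Measure.volume_eq_prod,
      Measure.prod_apply_symm (e.symm.measurable hSmeas)]
  have hsec : ∀ y : Fin k → ℝ, volume ((fun t => (t, y)) ⁻¹' (e.symm ⁻¹' S)) ≤
      Box.indicator (fun _ => ENNReal.ofReal (2 * Real.sqrt (2 * (c * A1)))) y := by
    intro y
    by_cases hy : y ∈ Box
    · rw [Set.indicator_of_mem hy]
      refine le_trans (measure_mono ?_)
        (sq_window_bound (-(σ i0) * ∑ j, σ (i0.succAbove j) * y j ^ 2) (c * A1) (by positivity))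
      intro t ht
      simp only [Set.mem_preimage, hS, Set.mem_setOf_eq] at ht ⊢
      obtain ⟨-, h2⟩ := ht
      have hsum : ∑ i, σ i * (e.symm (t, y)) i ^ 2
          = σ i0 * t ^ 2 + ∑ j, σ (i0.succAbove j) * y j ^ 2 := by
        rw [Fin.sum_univ_succAbove _ i0, (happ t y).1]
        congr 1
        exact Finset.sum_congr rfl fun j _ => by rw [(happ t y).2 j]
      rw [hsum] at h2
      have habs : |t ^ 2 - (-(σ i0)) * ∑ j, σ (i0.succAbove j) * y j ^ 2|
          = |σ i0 * t ^ 2 + ∑ j, σ (i0.succAbove j) * y j ^ 2| := by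
        rcases hσ i0 with h | h
        · rw [h]; congr 1; ring
        · rw [h, ← abs_neg]; congr 1; ring
      rw [habs]; exact h2
    · rw [Set.indicator_of_notMem hy]
      have hempty : (fun t => (t, y)) ⁻¹' (e.symm ⁻¹' S) = ∅ := by
        ext t
        simp only [Set.mem_preimage, hS, Set.mem_setOf_eq, Set.mem_empty_iff_false, iff_false]
        rintro ⟨h1, -⟩
        apply hy
        intro j _
        have := h1 (i0.succAbove j)
        rw [(happ t y).2 j] at this
        exact abs_le.1 this
      simp [hempty]
  have hBoxvol : volume Box = ENNReal.ofReal (∏ j, (2 * c * Real.sqrt (A (i0.succAbove j)))) := by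
    rw [hBox, volume_pi_pi, ENNReal.ofReal_prod_of_nonneg (fun j _ => by positivity)]
    exact Finset.prod_congr rfl fun j _ => by rw [Real.volume_Icc]; congr 1; ring
  calc volume S = ∫⁻ y, volume ((fun t => (t, y)) ⁻¹' (e.symm ⁻¹' S)) := hvol
    _ ≤ ∫⁻ y, Box.indicator (fun _ => ENNReal.ofReal (2 * Real.sqrt (2 * (c * A1)))) y :=
        lintegral_mono hsec
    _ = ENNReal.ofReal (2 * Real.sqrt (2 * (c * A1))) * volume Box :=
        lintegral_indicator_const hBoxmeas _
    _ ≤ ENNReal.ofReal (((2*c)^k * (2 * Real.sqrt (2*c))) *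
        Real.sqrt (A1 * ∏ i, A i) / Real.sqrt (A (Fin.last k))) := by
        rw [hBoxvol, ← ENNReal.ofReal_mul (by positivity)]
        apply ENNReal.ofReal_le_ofReal
        have hprodA : ∏ i, A i = A i0 * ∏ j, A (i0.succAbove j) := Fin.prod_univ_succAbove A i0
        have hps : ∏ j, Real.sqrt (A (i0.succAbove j)) = Real.sqrt (∏ j, A (i0.succAbove j)) :=
          sqrt_prod' _ _ fun j _ => (hA _).le
        have h1 : Real.sqrt (A1 * ∏ i, A i)
            = Real.sqrt A1 * (Real.sqrt (A i0) * Real.sqrt (∏ j, A (i0.succAbove j))) := by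
          rw [hprodA, Real.sqrt_mul hA1.le, Real.sqrt_mul (hA i0).le]
        have h2 : Real.sqrt (2 * (c * A1)) = Real.sqrt (2 * c) * Real.sqrt A1 := by
          rw [show 2 * (c * A1) = (2 * c) * A1 by ring, Real.sqrt_mul (by positivity)]
        have h3 : ∏ j, (2 * c * Real.sqrt (A (i0.succAbove j)))
            = (2 * c) ^ k * Real.sqrt (∏ j, A (i0.succAbove j)) := by
          rw [Finset.prod_mul_distrib, Finset.prod_const, hps]
          simp
        have hne : Real.sqrt (A i0) ≠ 0 := Real.sqrt_ne_zero'.mpr (hA _)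
        rw [show Real.sqrt (A (Fin.last k)) = Real.sqrt (A i0) from rfl]
        rw [h1, h2, h3,
          show Real.sqrt A1 * (Real.sqrt (A i0) * Real.sqrt (∏ j, A (i0.succAbove j)))
              = Real.sqrt A1 * Real.sqrt (∏ j, A (i0.succAbove j)) * Real.sqrt (A i0) from by
            ring,
          mul_div_assoc, mul_div_cancel_right₀ _ hne]
        exact le_of_eq (by ring)

/-- The volume estimate for the region appearing in the singular integral:
here `m = n - 1 ≥ 1` is the number of variables `x₂,…,xₙ`, `A1 = A₁` and
`A i` are the coefficients `A₂,…,Aₙ`, with the largest coefficient (among all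
of `A₁,…,Aₙ`) being the last one, `A (m-1) = Aₙ`. -/
theorem volume_region_bound (m : ℕ) (hm : 1 ≤ m) (c : ℝ) (hc : 0 < c) :
    ∃ C : ℝ, 0 < C ∧ ∀ (A1 : ℝ) (A : Fin m → ℝ) (σ : Fin m → ℝ),
      0 < A1 → (∀ i, 0 < A i) → (∀ i, σ i = 1 ∨ σ i = -1) →
      (∀ i, A i ≤ A ⟨m - 1, by omega⟩) → A1 ≤ A ⟨m - 1, by omega⟩ →
      volume {x : Fin m → ℝ |
          (∀ i, |x i| ≤ c * Real.sqrt (A i)) ∧ |∑ i, σ i * x i ^ 2| ≤ c * A1} ≤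
        ENNReal.ofReal
          (C * Real.sqrt (A1 * ∏ i, A i) / Real.sqrt (A ⟨m - 1, by omega⟩)) := by
  obtain ⟨k, rfl⟩ : ∃ k, m = k + 1 := ⟨m - 1, by omega⟩
  exact ⟨(2 * c) ^ k * (2 * Real.sqrt (2 * c)), by positivity,
    fun A1 A σ hA1 hA hσ _ _ => volume_region_bound_aux k c hc A1 A σ hA1 hA hσ⟩
end
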